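/- For an irreducible positive recurrent Markov chain on a finite set V with stationary distribution pi and k(v) = E_v[T_b], define K_4 := max_v k(v) + (1/2)( d(b)/pi(b) + sum_{u,v} d(u)p(u,v)|k(u)-k(v)-1| ). Then for any rotor walk and all t >= 1, | pi(b) - n_t(b)/t | <= K_4 pi(b)/t. -/

import Mathlib

open scoped BigOperators Classical

/-- `(x, r)` is a rotor walk for the rotor mechanism `(d, succ)`.  Rotor values are
`0`-based: rotor value `j` at `u` means the rotor points to `succ u j`
(corresponding to `u^(j+1)` in `1`-based notation).  At each step the rotor at the
current particle position is incremented cyclically and the particle moves in the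
new rotor direction. -/
def IsRotorWalk {V : Type*} (d : V → ℕ) (succ : V → ℕ → V)
    (x : ℕ → V) (r : ℕ → V → ℕ) : Prop :=
  (∀ v, r 0 v < d v) ∧
  (∀ t, r (t + 1) (x t) = (r t (x t) + 1) % d (x t)) ∧
  (∀ t v, v ≠ x t → r (t + 1) v = r t v) ∧
  (∀ t, x (t + 1) = succ (x t) (r (t + 1) (x t)))

/-- the number of visits of the walk `x` to `v` strictly before time `t` -/
noncomputable def nvisits {V : Type*} (x : ℕ → V) (t : ℕ) (v : V) : ℕ :=
  ((Finset.range t).filter fun s => x s = v).card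

/-- the rotor mechanism `(d, succ)` realizes the transition kernel `p`:
`p u v` is the proportion of the `d u` successors of `u` equal to `v` -/
def Realizes {V : Type*} (d : V → ℕ) (succ : V → ℕ → V) (p : V → V → ℝ) : Prop :=
  (∀ u, 0 < d u) ∧
  ∀ u v, p u v = ((Finset.range (d u)).filter fun i => succ u i = v).card / d u

/-- irreducibility of the kernel: any vertex can be reached from any other by a path of
positive-probability steps -/
def IrreducibleKernel {V : Type*} (p : V → V → ℝ) : Prop :=
  ∀ u v : V, ∃ (n : ℕ) (f : ℕ → V), f 0 = u ∧ f n = v ∧ ∀ i < n, 0 < p (f i) (f (i + 1))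

/-!
With `P k u = ∑ v, p u v * k v`, the hitting-time equations and Kac's formula
`1 + P k b = 1 / π b` give `k u - P k u = 1 - [u = b] / π b`, so summing along the walk,
`k (x 0) - k (x t) = t - n_t(b) / π b + ∑_{s<t} (P k (x s) - k (x (s+1)))`.
The rotor at `u` runs through the successors `succ u j` cyclically, and over a full cycle the
terms `P k u - k (succ u j)` sum to zero. Hence the visits to `u` contribute a partial cycle
sum, which is at most half of `∑_j |P k u - k (succ u j)|` in absolute value, while the
boundary term is at most `⨆ v, k v` because `k ≥ 0`.
-/

open Finset

lemma abs_sum_le_half_sum_abs_of_sum_eq_zero {ι : Type*} {s t : Finset ι} (hst : s ⊆ t)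
    {y : ι → ℝ} (hy : ∑ i ∈ t, y i = 0) : |∑ i ∈ s, y i| ≤ (1 / 2) * ∑ i ∈ t, |y i| := by
  have hsplit := sum_sdiff hst (f := y)
  have hsplit_abs := sum_sdiff hst (f := fun i => |y i|)
  have hcompl : ∑ i ∈ t \ s, y i = -∑ i ∈ s, y i := by linarith
  have h₁ := abs_sum_le_sum_abs y (t \ s)
  have h₂ := abs_sum_le_sum_abs y s
  rw [hcompl, abs_neg] at h₁
  linarith

section CyclicSums

variable {M : Type*} [AddCommMonoid M]

lemma injOn_add_mod (c d : ℕ) : Set.InjOn (fun m => (c + m) % d) (range d) := by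
  intro m hm n hn h
  have hmod : m ≡ n [MOD d] := Nat.ModEq.add_left_cancel' c h
  rwa [Nat.ModEq, Nat.mod_eq_of_lt (mem_range.1 hm), Nat.mod_eq_of_lt (mem_range.1 hn)] at hmod

lemma sum_range_add_mod (f : ℕ → M) (c d : ℕ) :
    ∑ m ∈ range d, f ((c + m) % d) = ∑ j ∈ range d, f j := by
  have himage : (range d).image (fun m => (c + m) % d) = range d := by
    refine eq_of_subset_of_card_le (fun j hj => ?_) ?_
    · obtain ⟨m, hm, rfl⟩ := mem_image.1 hj
      exact mem_range.2 (Nat.mod_lt _ (Nat.zero_lt_of_lt (mem_range.1 hm)))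
    · rw [card_image_of_injOn (injOn_add_mod c d)]
  rw [← sum_image (injOn_add_mod c d), himage]

lemma sum_range_add_mod_eq_sum_range_mod {f : ℕ → M} {d : ℕ} (hf : ∑ j ∈ range d, f j = 0)
    (c N : ℕ) : ∑ m ∈ range N, f ((c + m) % d) = ∑ m ∈ range (N % d), f ((c + m) % d) := by
  have hperiod : ∀ m, (c + (d + m)) % d = (c + m) % d := fun m => by
    rw [Nat.add_left_comm, Nat.add_mod_left]
  have hcycles : ∀ q ρ, ∑ m ∈ range (d * q + ρ), f ((c + m) % d)
      = ∑ m ∈ range ρ, f ((c + m) % d) := by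
    intro q ρ
    induction q with
    | zero => simp
    | succ q ih =>
      rw [show d * (q + 1) + ρ = d + (d * q + ρ) by ring, sum_range_add, sum_range_add_mod, hf,
        zero_add]
      simp only [hperiod, ih]
  rw [← hcycles (N / d) (N % d), Nat.div_add_mod]

lemma abs_sum_range_add_mod_le {f : ℕ → ℝ} {d : ℕ} (hd : 0 < d) (hf : ∑ j ∈ range d, f j = 0)
    (c N : ℕ) : |∑ m ∈ range N, f ((c + m) % d)| ≤ (1 / 2) * ∑ j ∈ range d, |f j| := by
  have hinj : Set.InjOn (fun m => (c + m) % d) (range (N % d)) :=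
    (injOn_add_mod c d).mono (coe_subset.2 (range_subset_range.2 (Nat.mod_lt N hd).le))
  rw [sum_range_add_mod_eq_sum_range_mod hf, ← sum_image hinj]
  refine abs_sum_le_half_sum_abs_of_sum_eq_zero (fun j hj => ?_) hf
  obtain ⟨m, -, rfl⟩ := mem_image.1 hj
  exact mem_range.2 (Nat.mod_lt _ hd)

end CyclicSums

section Visits

variable {V : Type*} (x : ℕ → V)

lemma nvisits_zero (v : V) : nvisits x 0 v = 0 := by
  simp [nvisits]

lemma nvisits_succ (t : ℕ) (v : V) :
    nvisits x (t + 1) v = nvisits x t v + if x t = v then 1 else 0 := by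
  simp only [nvisits, card_filter, sum_range_succ]

lemma sum_range_eq_sum_sum_nvisits [Fintype V] {M : Type*} [AddCommMonoid M]
    (F : V → ℕ → M) (t : ℕ) :
    ∑ s ∈ range t, F (x s) (nvisits x s (x s)) = ∑ v, ∑ m ∈ range (nvisits x t v), F v m := by
  induction t with
  | zero => simp [nvisits_zero]
  | succ t ih =>
    have hvisit : ∀ v, ∑ m ∈ range (nvisits x (t + 1) v), F v m
        = ∑ m ∈ range (nvisits x t v), F v m + if x t = v then F v (nvisits x t v) else 0 := by
      intro v
      by_cases h : x t = v <;> simp [nvisits_succ, h, sum_range_succ]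
    rw [sum_range_succ, ih, sum_congr rfl fun v _ => hvisit v, sum_add_distrib, sum_ite_eq,
      if_pos (mem_univ _)]

end Visits

section Rotor

variable {V : Type*} {d : V → ℕ} {succ : V → ℕ → V} {x : ℕ → V} {r : ℕ → V → ℕ}

lemma IsRotorWalk.rotor_eq (hwalk : IsRotorWalk d succ x r) (s : ℕ) (u : V) :
    r s u = (r 0 u + nvisits x s u) % d u := by
  obtain ⟨hr0, hrinc, hrfix, -⟩ := hwalk
  induction s generalizing u with
  | zero => rw [nvisits_zero, Nat.add_zero, Nat.mod_eq_of_lt (hr0 u)]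
  | succ s ih =>
    rw [nvisits_succ]
    by_cases h : x s = u
    · subst h
      rw [hrinc s, ih, if_pos rfl, Nat.mod_add_mod, Nat.add_assoc]
    · rw [hrfix s u (Ne.symm h), ih, if_neg h, Nat.add_zero]

lemma IsRotorWalk.step_eq (hwalk : IsRotorWalk d succ x r) (s : ℕ) :
    x (s + 1) = succ (x s) ((r 0 (x s) + 1 + nvisits x s (x s)) % d (x s)) := by
  rw [hwalk.2.2.2 s, hwalk.2.1 s, hwalk.rotor_eq s, Nat.mod_add_mod, Nat.add_right_comm]

variable {p : V → V → ℝ}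

lemma Realizes.nonneg (hreal : Realizes d succ p) (u v : V) : 0 ≤ p u v := by
  rw [hreal.2]
  positivity

lemma Realizes.sum_range_comp [Fintype V] (hreal : Realizes d succ p) (u : V) (F : V → ℝ) :
    ∑ j ∈ range (d u), F (succ u j) = ∑ v, (d u : ℝ) * p u v * F v := by
  rw [← sum_fiberwise (range (d u)) (succ u)]
  refine sum_congr rfl fun v _ => ?_
  have hdu : (d u : ℝ) ≠ 0 := Nat.cast_ne_zero.2 (hreal.1 u).ne'
  rw [sum_congr rfl fun j hj => by rw [(mem_filter.1 hj).2], sum_const, nsmul_eq_mul,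
    hreal.2 u v, mul_div_cancel₀ _ hdu]

lemma Realizes.sum_eq_one [Fintype V] (hreal : Realizes d succ p) (u : V) : ∑ v, p u v = 1 := by
  have hdu : (d u : ℝ) ≠ 0 := Nat.cast_ne_zero.2 (hreal.1 u).ne'
  have h := hreal.sum_range_comp u fun _ => 1
  simp only [sum_const, card_range, nsmul_eq_mul, mul_one, ← mul_sum] at h
  exact (mul_eq_left₀ hdu).1 h.symm

lemma Realizes.sum_range_mean_sub [Fintype V] (hreal : Realizes d succ p) (u : V) (f : V → ℝ) :
    ∑ j ∈ range (d u), (∑ v, p u v * f v - f (succ u j)) = 0 := by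
  rw [sum_sub_distrib, hreal.sum_range_comp u f, sum_const, card_range, nsmul_eq_mul, mul_sum]
  simp only [mul_assoc, sub_self]

theorem IsRotorWalk.abs_sum_mean_sub_le [Fintype V] (hreal : Realizes d succ p)
    (hwalk : IsRotorWalk d succ x r) (f : V → ℝ) (t : ℕ) :
    |∑ s ∈ range t, (∑ v, p (x s) v * f v - f (x (s + 1)))|
      ≤ (1 / 2) * ∑ u, ∑ v, (d u : ℝ) * p u v * |∑ w, p u w * f w - f v| := by
  have hgroup : ∑ s ∈ range t, (∑ v, p (x s) v * f v - f (x (s + 1)))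
      = ∑ u, ∑ m ∈ range (nvisits x t u),
          (∑ w, p u w * f w - f (succ u ((r 0 u + 1 + m) % d u))) := by
    rw [← sum_range_eq_sum_sum_nvisits x
      (fun u m => ∑ w, p u w * f w - f (succ u ((r 0 u + 1 + m) % d u)))]
    exact sum_congr rfl fun s _ => by rw [hwalk.step_eq s]
  rw [hgroup, mul_sum]
  refine (abs_sum_le_sum_abs _ _).trans (sum_le_sum fun u _ => ?_)
  rw [← hreal.sum_range_comp u fun v => |∑ w, p u w * f w - f v|]
  exact abs_sum_range_add_mod_le (f := fun j => ∑ w, p u w * f w - f (succ u j)) (hreal.1 u)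
    (hreal.sum_range_mean_sub u f) _ _

end Rotor

section HittingTime

variable {V : Type*} [Fintype V] {p : V → V → ℝ} {b : V} {k : V → ℝ}

/-- Minimum principle: at a minimiser `u ≠ b`, `k u = 1 + ∑ v, p u v * k v ≥ 1 + k u`. -/
lemma hittingTime_nonneg (hp : ∀ u v, 0 ≤ p u v) (hrow : ∀ u, ∑ v, p u v = 1) (hkb : k b = 0)
    (hk : ∀ u, u ≠ b → k u = 1 + ∑ v, p u v * k v) (v : V) : 0 ≤ k v := by
  obtain ⟨u₀, -, hmin⟩ := exists_min_image univ k ⟨b, mem_univ b⟩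
  by_cases hu₀ : u₀ = b
  · rw [← hkb, ← hu₀]
    exact hmin v (mem_univ v)
  · have hmean : k u₀ ≤ ∑ w, p u₀ w * k w :=
      calc k u₀ = ∑ w, p u₀ w * k u₀ := by rw [← sum_mul, hrow, one_mul]
        _ ≤ ∑ w, p u₀ w * k w :=
          sum_le_sum fun w _ => mul_le_mul_of_nonneg_left (hmin w (mem_univ w)) (hp u₀ w)
    linarith [hk u₀ hu₀]

/-- Kac's formula `E_b[T_b^+] = 1 / π b`. -/
lemma one_add_sum_mul_hittingTime_eq_inv {π : V → ℝ} (hπone : ∑ v, π v = 1)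
    (hπ : ∀ v, ∑ u, π u * p u v = π v) (hkb : k b = 0)
    (hk : ∀ u, u ≠ b → k u = 1 + ∑ v, p u v * k v) :
    1 + ∑ v, p b v * k v = (π b)⁻¹ := by
  have hstat : ∑ u, π u * ∑ v, p u v * k v = ∑ v, π v * k v := by
    simp_rw [mul_sum, ← mul_assoc]
    rw [sum_comm]
    simp_rw [← sum_mul, hπ]
  have hsplit : ∀ u, π u * (1 + ∑ v, p u v * k v)
      = π u * k u + if u = b then π u * (1 + ∑ v, p u v * k v) else 0 := by
    intro u
    by_cases h : u = b
    · subst h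
      rw [hkb, if_pos rfl]
      ring
    · rw [hk u h, if_neg h]
      ring
  have hsum := sum_congr rfl fun u (_ : u ∈ univ) => hsplit u
  simp only [sum_add_distrib, sum_ite_eq', mem_univ, if_true, mul_add, mul_one, hπone,
    hstat] at hsum
  exact eq_inv_of_mul_eq_one_right (by linarith)

end HittingTime

section Estimate

variable {V : Type*} [Fintype V] {d : V → ℕ} {succ : V → ℕ → V} {p : V → V → ℝ} {π : V → ℝ}
  {b : V} {k : V → ℝ}

lemma sum_mul_abs_mean_sub_hittingTime_le (hreal : Realizes d succ p)
    (hkP : ∀ u, ∑ w, p u w * k w = k u - 1 + if u = b then (π b)⁻¹ else 0) (hπb : 0 < π b) :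
    ∑ u, ∑ v, (d u : ℝ) * p u v * |∑ w, p u w * k w - k v|
      ≤ (d b : ℝ) / π b + ∑ u, ∑ v, (d u : ℝ) * p u v * |k u - k v - 1| := by
  have hexcess : ∀ u, 0 ≤ (if u = b then (π b)⁻¹ else 0) := fun u => by
    split_ifs <;> positivity
  have hterm : ∀ u v, (d u : ℝ) * p u v * |∑ w, p u w * k w - k v|
      ≤ (d u : ℝ) * p u v * |k u - k v - 1| + (d u : ℝ) * (if u = b then (π b)⁻¹ else 0) * p u v
      := by
    intro u v
    have hdp : 0 ≤ (d u : ℝ) * p u v := mul_nonneg (Nat.cast_nonneg _) (hreal.nonneg u v)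
    have habs : |∑ w, p u w * k w - k v| ≤ |k u - k v - 1| + if u = b then (π b)⁻¹ else 0 := by
      rw [hkP u, show k u - 1 + (if u = b then (π b)⁻¹ else 0) - k v
        = (k u - k v - 1) + if u = b then (π b)⁻¹ else 0 by ring]
      exact (abs_add_le _ _).trans_eq (by rw [abs_of_nonneg (hexcess u)])
    have hmul := mul_le_mul_of_nonneg_left habs hdp
    rw [mul_add] at hmul
    linarith
  calc ∑ u, ∑ v, (d u : ℝ) * p u v * |∑ w, p u w * k w - k v|
      ≤ ∑ u, ∑ v, ((d u : ℝ) * p u v * |k u - k v - 1|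
          + (d u : ℝ) * (if u = b then (π b)⁻¹ else 0) * p u v) :=
        sum_le_sum fun u _ => sum_le_sum fun v _ => hterm u v
    _ = ∑ u, (d u : ℝ) * (if u = b then (π b)⁻¹ else 0) * ∑ v, p u v
          + ∑ u, ∑ v, (d u : ℝ) * p u v * |k u - k v - 1| := by
        simp only [sum_add_distrib, mul_sum]
        ring
    _ = (d b : ℝ) / π b + ∑ u, ∑ v, (d u : ℝ) * p u v * |k u - k v - 1| := by
        simp only [hreal.sum_eq_one, mul_one, mul_ite, mul_zero, sum_ite_eq', mem_univ, if_true,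
          div_eq_mul_inv]

theorem abs_sub_nvisits_div_le {x : ℕ → V} {r : ℕ → V → ℕ} (hreal : Realizes d succ p)
    (hπb : 0 < π b) (hπone : ∑ v, π v = 1) (hπ : ∀ v, ∑ u, π u * p u v = π v) (hkb : k b = 0)
    (hk : ∀ u, u ≠ b → k u = 1 + ∑ v, p u v * k v) (hwalk : IsRotorWalk d succ x r) (t : ℕ) :
    |(t : ℝ) - nvisits x t b / π b| ≤ (⨆ v, k v) + (1 / 2) * ((d b : ℝ) / π b +
      ∑ u, ∑ v, (d u : ℝ) * p u v * |k u - k v - 1|) := by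
  have hkac := one_add_sum_mul_hittingTime_eq_inv hπone hπ hkb hk
  have hkP : ∀ u, ∑ w, p u w * k w = k u - 1 + if u = b then (π b)⁻¹ else 0 := by
    intro u
    by_cases h : u = b
    · subst h
      rw [hkb, if_pos rfl]
      linarith
    · rw [hk u h, if_neg h]
      ring
  have hvisits : ∑ s ∈ range t, (1 - if x s = b then (π b)⁻¹ else 0)
      = (t : ℝ) - nvisits x t b / π b := by
    simp [sum_sub_distrib, sum_ite, nvisits, div_eq_mul_inv]
  have htelescope : k (x 0) - k (x t) = ((t : ℝ) - nvisits x t b / π b)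
      + ∑ s ∈ range t, (∑ w, p (x s) w * k w - k (x (s + 1))) := by
    rw [← sum_range_sub' (fun s => k (x s)), ← hvisits, ← sum_add_distrib]
    exact sum_congr rfl fun s _ => by rw [hkP (x s)]; ring
  have hk0 := hittingTime_nonneg hreal.nonneg hreal.sum_eq_one hkb hk
  have hkle : ∀ v, k v ≤ ⨆ v, k v := le_ciSup (Set.finite_range k).bddAbove
  have hends : |k (x 0) - k (x t)| ≤ ⨆ v, k v :=
    abs_sub_le_of_nonneg_of_le (hk0 _) (hkle _) (hk0 _) (hkle _)
  have hdiscrepancy := (hwalk.abs_sum_mean_sub_le hreal k t).trans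
    (mul_le_mul_of_nonneg_left (sum_mul_abs_mean_sub_hittingTime_le hreal hkP hπb)
      (by norm_num))
  calc |(t : ℝ) - nvisits x t b / π b|
      = |(k (x 0) - k (x t)) - ∑ s ∈ range t, (∑ w, p (x s) w * k w - k (x (s + 1)))| := by
        rw [htelescope, add_sub_cancel_right]
    _ ≤ _ := (abs_sub _ _).trans (add_le_add hends hdiscrepancy)

end Estimate

theorem rotor_stationary_distribution_general {V : Type*} [Fintype V]
    (d : V → ℕ) (succ : V → ℕ → V) (p : V → V → ℝ)
    (hreal : Realizes d succ p)
    (π : V → ℝ) (hπpos : ∀ v, 0 < π v) (hπone : ∑ v, π v = 1)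
    (hπ : ∀ v, ∑ u, π u * p u v = π v)
    (b : V)
    (k : V → ℝ) (hkb : k b = 0)
    (hk : ∀ u, u ≠ b → k u = 1 + ∑ v, p u v * k v)
    (K₄ : ℝ)
    (hK₄ : K₄ = (⨆ v, k v) + (1 / 2) * ((d b : ℝ) / π b +
      ∑ u, ∑ v, (d u : ℝ) * p u v * |k u - k v - 1|))
    (x : ℕ → V) (r : ℕ → V → ℕ) (hwalk : IsRotorWalk d succ x r)
    (t : ℕ) (ht : 1 ≤ t) :
    |π b - (nvisits x t b : ℝ) / (t : ℝ)| ≤ K₄ * π b / (t : ℝ) := by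
  have hπb := hπpos b
  have htpos : (0 : ℝ) < t := Nat.cast_pos.2 ht
  have hbound : |(t : ℝ) - nvisits x t b / π b| ≤ K₄ :=
    hK₄ ▸ abs_sub_nvisits_div_le hreal hπb hπone hπ hkb hk hwalk t
  calc |π b - (nvisits x t b : ℝ) / (t : ℝ)|
      = π b / t * |(t : ℝ) - nvisits x t b / π b| := by
        rw [← abs_of_pos (div_pos hπb htpos), ← abs_mul]
        congr 1
        field_simp
    _ ≤ π b / t * K₄ := mul_le_mul_of_nonneg_left hbound (div_pos hπb htpos).le
    _ = K₄ * π b / t := by ring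

/-- **Stationary distribution** (Theorem `stat-prob`). -/
theorem rotor_stationary_distribution {V : Type*} [Fintype V]
    (d : V → ℕ) (succ : V → ℕ → V) (p : V → V → ℝ)
    (hreal : Realizes d succ p) (hirr : IrreducibleKernel p)
    (π : V → ℝ) (hπpos : ∀ v, 0 < π v) (hπone : ∑ v, π v = 1)
    (hπ : ∀ v, ∑ u, π u * p u v = π v)
    (b : V)
    (k : V → ℝ) (hkb : k b = 0)
    (hk : ∀ u, u ≠ b → k u = 1 + ∑ v, p u v * k v)
    (K₄ : ℝ)
    (hK₄ : K₄ = (⨆ v, k v) + (1 / 2) * ((d b : ℝ) / π b +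
      ∑ u, ∑ v, (d u : ℝ) * p u v * |k u - k v - 1|))
    (x : ℕ → V) (r : ℕ → V → ℕ) (hwalk : IsRotorWalk d succ x r)
    (t : ℕ) (ht : 1 ≤ t) :
    |π b - (nvisits x t b : ℝ) / (t : ℝ)| ≤ K₄ * π b / (t : ℝ) :=
  rotor_stationary_distribution_general d succ p hreal π hπpos hπone hπ b k hkb hk K₄ hK₄ x r hwalk
    t ht
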